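/- Let $0<r<1<R$, $A=\{z\in\mathbb{C}:r<|z|<R\}$, and let $\zeta:A\to\mathbb{C}$ be holomorphic and nonvanishing with winding number $\frac{1}{2\pi i}\oint_{|z|=1}\frac{\zeta'(z)}{\zeta(z)}dz=1$ along the unit circle, and let $L$ be holomorphic on $A$ with $e^{L(z)}=\zeta(z)/z$ on $A$. Suppose there exist $0<\rho_1<\rho_2$ and a holomorphic map $h$ from the annulus $W=\{\rho_1<|\zeta|<\rho_2\}$ into $A$ such that $\zeta(S^1)\subseteq W$, $\zeta(h(w))=w$ for all $w\in W$, and $h(\zeta(z))=z$ for all $|z|=1$. Define $t^{i}:=\frac{1}{2\pi i}\oint_{|z|=1}\frac{\zeta(z)^{-i}}{i}\,\frac{dz}{z}$ for integers $i\ne0$ and $t^{0}:=-\frac{1}{2\pi i}\oint_{|z|=1}L(z)\,\frac{dz}{z}$. Then $\frac{1}{2\pi i}\oint_{|z|=1}\zeta(z)\,\big(L(z)-1\big)\,\frac{dz}{z} \;=\; \sum_{i=0}^{\infty} t^{i}\,t^{-i-1}$, the series converging absolutely. (Circle integrals counterclockwise.) -/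

import Mathlib

/-!
Put `M = L ∘ h`, holomorphic on the annulus `W`, so that `L = M ∘ ζ` on the unit circle, and let
`cₙ` be the Laurent coefficients of `M`. Expanding `M` in its Laurent series and integrating term
by term, the winding number hypothesis gives the change of variables
`∮_{|z|=1} g(ζ) ζ' dz = ∮_{|w|=ρ} g(w) dw` for every `g` holomorphic on `W`. Since
`L' = ζ'/ζ - 1/z`, integrating by parts turns `tⁱ` into `-(2πi)⁻¹ ∮ ζ^{-i-1} ζ' L = -cᵢ`, and the
left-hand side into `(2πi)⁻¹ ∮ ζ' L² / 2 = ∑_{n ∈ ℤ} cₙ c₋ₙ₋₁ / 2`. The last summand is invariant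
under `n ↦ -n - 1`, so this is `∑_{n ≥ 0} tⁿ t⁻ⁿ⁻¹`.
-/

open Complex Metric Set Filter Topology Real

theorem hasSum_circleIntegral_of_norm_le {ι E : Type*} [Countable ι] [NormedAddCommGroup E]
    [NormedSpace ℂ E] {F : ι → ℂ → E} {f : ℂ → E} {c : ℂ} {R : ℝ} {u : ι → ℝ} (hR : 0 ≤ R)
    (hF : ∀ i, ContinuousOn (F i) (sphere c R)) (hu : Summable u)
    (hFu : ∀ i, ∀ z ∈ sphere c R, ‖F i z‖ ≤ u i)
    (hf : ∀ z ∈ sphere c R, HasSum (fun i => F i z) (f z)) :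
    HasSum (fun i => ∮ z in C(c, R), F i z) (∮ z in C(c, R), f z) := by
  have hmem (θ : ℝ) : circleMap c R θ ∈ sphere c R := circleMap_mem_sphere c hR θ
  refine intervalIntegral.hasSum_integral_of_dominated_convergence (fun i _ => R * u i)
    (fun i => ?_) (fun i => .of_forall fun θ _ => ?_) (.of_forall fun _ _ => hu.mul_left R)
    intervalIntegrable_const (.of_forall fun θ _ => (hf _ (hmem θ)).const_smul _)
  · have hcont : Continuous fun θ => deriv (circleMap c R) θ • F i (circleMap c R θ) := by
      simp only [deriv_circleMap]
      exact ((continuous_circleMap 0 R).mul continuous_const).smul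
        ((hF i).comp_continuous (continuous_circleMap c R) hmem)
    exact hcont.aestronglyMeasurable
  · rw [norm_smul, deriv_circleMap, norm_mul, norm_circleMap_zero, norm_I, mul_one,
      abs_of_nonneg hR]
    exact mul_le_mul_of_nonneg_left (hFu i _ (hmem θ)) hR

theorem circleIntegral_eq_of_hasDerivAt_sub {F g h : ℂ → ℂ} {c : ℂ} {R : ℝ} (hR : 0 ≤ R)
    (hF : ∀ z ∈ sphere c R, HasDerivAt F (g z - h z) z) (hg : CircleIntegrable g c R)
    (hh : CircleIntegrable h c R) : (∮ z in C(c, R), g z) = ∮ z in C(c, R), h z := by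
  have := circleIntegral.integral_eq_zero_of_hasDerivWithinAt hR fun z hz =>
    (hF z hz).hasDerivWithinAt
  rwa [circleIntegral.integral_sub hg hh, sub_eq_zero] at this

theorem tsum_int_eq_two_mul_tsum_nat {𝕜 : Type*} [NormedField 𝕜] {g : ℤ → 𝕜} (hg : Summable g)
    (hsymm : ∀ n : ℤ, g (-n - 1) = g n) : ∑' n : ℤ, g n = 2 * ∑' n : ℕ, g n := by
  rw [← tsum_nat_add_neg_add_one hg, ← tsum_mul_left]
  congr 1 with n
  rw [show -((n : ℤ) + 1) = -n - 1 by ring, hsymm, two_mul]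

theorem zpow_le_zpow_add_zpow {a b x : ℝ} (ha : 0 < a) (hax : a ≤ x) (hxb : x ≤ b) (n : ℤ) :
    x ^ n ≤ a ^ n + b ^ n := by
  have hx : 0 < x := ha.trans_le hax
  rcases le_total 0 n with hn | hn
  · exact (zpow_le_zpow_left₀ hn hx.le hxb).trans (le_add_of_nonneg_left (zpow_nonneg ha.le n))
  · refine le_add_of_le_of_nonneg ?_ (zpow_nonneg (ha.trans_le (hax.trans hxb)).le n)
    have := inv_anti₀ (zpow_pos ha _) (zpow_le_zpow_left₀ (neg_nonneg.mpr hn) ha.le hax)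
    rwa [zpow_neg, zpow_neg, inv_inv, inv_inv] at this

theorem circleIntegral_sub_inv_of_notMem_closedBall {c w : ℂ} {R : ℝ} (hR : 0 ≤ R)
    (hw : w ∉ closedBall c R) : (∮ ξ in C(c, R), (ξ - w)⁻¹) = 0 := by
  refine Complex.circleIntegral_eq_zero_of_differentiable_on_off_countable hR countable_empty
    (ContinuousOn.inv₀ (f := fun ξ => ξ - w) (by fun_prop) fun ξ hξ h => ?_) fun ξ hξ => ?_
  · exact hw (sub_eq_zero.mp h ▸ hξ)
  · exact DifferentiableAt.inv (h := fun ξ => ξ - w) (by fun_prop)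
      (sub_ne_zero.mpr fun h => hw (h ▸ ball_subset_closedBall hξ.1))

theorem circleIntegral_dslope {f : ℂ → ℂ} {c w : ℂ} {R : ℝ} (hR : 0 ≤ R)
    (hf : ContinuousOn f (sphere c R)) (hw : w ∉ sphere c R) :
    (∮ ξ in C(c, R), dslope f w ξ)
      = (∮ ξ in C(c, R), f ξ / (ξ - w)) - f w * ∮ ξ in C(c, R), (ξ - w)⁻¹ := by
  have hne : ∀ ξ ∈ sphere c R, ξ - w ≠ 0 := fun ξ hξ =>
    sub_ne_zero.mpr (ne_of_mem_of_not_mem hξ hw)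
  have hsub : ContinuousOn (fun ξ => ξ - w) (sphere c R) := by fun_prop
  have h₁ : CircleIntegrable (fun ξ => f ξ / (ξ - w)) c R := (hf.div hsub hne).circleIntegrable hR
  have h₂ : CircleIntegrable (fun ξ => f w * (ξ - w)⁻¹) c R :=
    (continuousOn_const.mul (hsub.inv₀ hne)).circleIntegrable hR
  rw [← circleIntegral.integral_const_mul, ← circleIntegral.integral_sub h₁ h₂]
  refine circleIntegral.integral_congr hR fun ξ hξ => ?_
  simp only [dslope_of_ne f (sub_ne_zero.mp (hne ξ hξ)), slope_def_field]
  ring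

section Annulus

variable {ρ₁ ρ₂ : ℝ}

theorem isOpen_annulus (ρ₁ ρ₂ : ℝ) : IsOpen {w : ℂ | ρ₁ < ‖w‖ ∧ ‖w‖ < ρ₂} :=
  (isOpen_lt continuous_const continuous_norm).inter (isOpen_lt continuous_norm continuous_const)

theorem ne_zero_of_mem_annulus (hρ₁ : 0 ≤ ρ₁) {w : ℂ} (hw : w ∈ {w : ℂ | ρ₁ < ‖w‖ ∧ ‖w‖ < ρ₂}) :
    w ≠ 0 :=
  norm_pos_iff.mp (hρ₁.trans_lt hw.1)

theorem sphere_subset_annulus {ρ : ℝ} (h₁ : ρ₁ < ρ) (h₂ : ρ < ρ₂) :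
    sphere (0 : ℂ) ρ ⊆ {w : ℂ | ρ₁ < ‖w‖ ∧ ‖w‖ < ρ₂} := fun w hw => by
  rw [mem_sphere_zero_iff_norm] at hw
  exact ⟨hw ▸ h₁, hw ▸ h₂⟩

theorem closedBall_diff_ball_subset_annulus {a b : ℝ} (ha : ρ₁ < a) (hb : b < ρ₂) :
    closedBall (0 : ℂ) b \ ball 0 a ⊆ {w : ℂ | ρ₁ < ‖w‖ ∧ ‖w‖ < ρ₂} := fun w ⟨hwb, hwa⟩ => by
  rw [mem_closedBall_zero_iff] at hwb
  rw [mem_ball_zero_iff, not_lt] at hwa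
  exact ⟨ha.trans_le hwa, hwb.trans_lt hb⟩

theorem circleIntegral_eq_of_differentiableOn_annulus {g : ℂ → ℂ} (hρ₁ : 0 ≤ ρ₁)
    (hg : DifferentiableOn ℂ g {w : ℂ | ρ₁ < ‖w‖ ∧ ‖w‖ < ρ₂}) {a b : ℝ} (ha₁ : ρ₁ < a)
    (ha₂ : a < ρ₂) (hb₁ : ρ₁ < b) (hb₂ : b < ρ₂) :
    (∮ w in C(0, a), g w) = ∮ w in C(0, b), g w := by
  wlog hab : a ≤ b generalizing a b
  · exact (this hb₁ hb₂ ha₁ ha₂ (le_of_not_ge hab)).symm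
  have hsub := closedBall_diff_ball_subset_annulus ha₁ hb₂
  refine (Complex.circleIntegral_eq_of_differentiable_on_annulus_off_countable
    (hρ₁.trans_lt ha₁) hab countable_empty (hg.continuousOn.mono hsub) fun w hw => ?_).symm
  refine hg.differentiableAt ((isOpen_annulus ρ₁ ρ₂).mem_nhds (hsub ?_))
  exact ⟨ball_subset_closedBall hw.1.1, fun h => hw.1.2 (ball_subset_closedBall h)⟩

theorem circleIntegral_div_sub_add_circleIntegral_div_sub {f : ℂ → ℂ} (hρ₁ : 0 ≤ ρ₁)
    (hf : DifferentiableOn ℂ f {w : ℂ | ρ₁ < ‖w‖ ∧ ‖w‖ < ρ₂}) {a b : ℝ} {w : ℂ} (ha : ρ₁ < a)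
    (hwa : a < ‖w‖) (hwb : ‖w‖ < b) (hb : b < ρ₂) :
    (∮ ξ in C(0, b), f ξ / (ξ - w)) + (∮ ξ in C(0, a), f ξ / (w - ξ)) = 2 * π * I * f w := by
  have ha₂ : a < ρ₂ := hwa.trans (hwb.trans hb)
  have hb₁ : ρ₁ < b := (ha.trans hwa).trans hwb
  have hw : w ∈ {w : ℂ | ρ₁ < ‖w‖ ∧ ‖w‖ < ρ₂} := ⟨ha.trans hwa, hwb.trans hb⟩
  have hds := circleIntegral_eq_of_differentiableOn_annulus hρ₁
    ((differentiableOn_dslope ((isOpen_annulus ρ₁ ρ₂).mem_nhds hw)).mpr hf) ha ha₂ hb₁ hb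
  rw [circleIntegral_dslope (hρ₁.trans ha.le) (hf.continuousOn.mono (sphere_subset_annulus ha ha₂))
      (by simpa using hwa.ne'),
    circleIntegral_dslope (hρ₁.trans hb₁.le) (hf.continuousOn.mono (sphere_subset_annulus hb₁ hb))
      (by simpa using hwb.ne),
    circleIntegral_sub_inv_of_notMem_closedBall (hρ₁.trans ha.le) (by simpa using hwa),
    circleIntegral.integral_sub_inv_of_mem_ball (by simpa using hwb)] at hds
  have hswap : (∮ ξ in C(0, a), f ξ / (w - ξ)) = -1 * ∮ ξ in C(0, a), f ξ / (ξ - w) := by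
    rw [← circleIntegral.integral_const_mul]
    congr 1 with ξ
    rw [← neg_sub ξ w, div_neg, neg_one_mul]
  rw [hswap]
  linear_combination -hds

end Annulus

theorem zpow_neg_sub_one_mul_pow (ξ w : ℂ) (n : ℕ) :
    ξ ^ (-(n : ℤ) - 1) * w ^ n = ξ⁻¹ * (w / ξ) ^ n := by
  rw [show -(n : ℤ) - 1 = -((n + 1 : ℕ) : ℤ) by push_cast; ring, zpow_neg, zpow_natCast]
  ring

theorem hasSum_zpow_neg_sub_one_mul_pow {ξ w : ℂ} (h : ‖w‖ < ‖ξ‖) :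
    HasSum (fun n : ℕ => ξ ^ (-(n : ℤ) - 1) * w ^ n) (ξ - w)⁻¹ := by
  have hξ : ξ ≠ 0 := norm_pos_iff.mp ((norm_nonneg w).trans_lt h)
  have hq : ‖w / ξ‖ < 1 := by rwa [norm_div, div_lt_one (norm_pos_iff.mpr hξ)]
  have key := (hasSum_geometric_of_norm_lt_one hq).mul_left ξ⁻¹
  rw [← mul_inv, mul_sub, mul_one, mul_div_cancel₀ _ hξ] at key
  exact key.congr_fun (zpow_neg_sub_one_mul_pow ξ w)

theorem norm_zpow_neg_sub_one_mul_pow (ξ w : ℂ) (n : ℕ) :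
    ‖ξ ^ (-(n : ℤ) - 1) * w ^ n‖ = ‖ξ‖⁻¹ * (‖w‖ / ‖ξ‖) ^ n := by
  rw [zpow_neg_sub_one_mul_pow, norm_mul, norm_inv, norm_pow, norm_div]

theorem hasSum_circleIntegral_div_sub_of_norm_lt {g : ℂ → ℂ} {R : ℝ} {w : ℂ}
    (hg : ContinuousOn g (sphere 0 R)) (hw : ‖w‖ < R) :
    HasSum (fun n : ℕ => w ^ n * ∮ ξ in C(0, R), ξ ^ (-(n : ℤ) - 1) * g ξ)
      (∮ ξ in C(0, R), g ξ / (ξ - w)) := by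
  have hR : 0 < R := (norm_nonneg w).trans_lt hw
  obtain ⟨C, hC⟩ := (isCompact_sphere (0 : ℂ) R).exists_bound_of_continuousOn hg
  simp only [← circleIntegral.integral_const_mul]
  refine hasSum_circleIntegral_of_norm_le (u := fun n => R⁻¹ * (‖w‖ / R) ^ n * C) hR.le
    (fun n => ?_) ?_ (fun n ξ hξ => ?_) fun ξ hξ => ?_
  · refine continuousOn_const.mul ((continuousOn_id.zpow₀ _ fun ξ hξ => Or.inl ?_).mul hg)
    exact ne_zero_of_mem_sphere hR.ne' ⟨ξ, hξ⟩
  · exact ((summable_geometric_of_lt_one (by positivity) ((div_lt_one hR).mpr hw)).mul_left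
      R⁻¹).mul_right C
  · rw [mem_sphere_zero_iff_norm] at hξ
    rw [← mul_assoc, mul_comm (w ^ n), norm_mul, norm_zpow_neg_sub_one_mul_pow, hξ]
    exact mul_le_mul_of_nonneg_left (hC ξ (by simpa using hξ)) (by positivity)
  · rw [mem_sphere_zero_iff_norm] at hξ
    have key := (hasSum_zpow_neg_sub_one_mul_pow (hξ ▸ hw)).mul_right (g ξ)
    rw [← div_eq_inv_mul] at key
    exact key.congr_fun fun n => by ring

theorem hasSum_circleIntegral_div_sub_of_lt_norm {g : ℂ → ℂ} {R : ℝ} {w : ℂ}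
    (hg : ContinuousOn g (sphere 0 R)) (hR : 0 ≤ R) (hw : R < ‖w‖) :
    HasSum (fun n : ℕ => w ^ (-(n : ℤ) - 1) * ∮ ξ in C(0, R), ξ ^ n * g ξ)
      (∮ ξ in C(0, R), g ξ / (w - ξ)) := by
  have hw₀ : 0 < ‖w‖ := hR.trans_lt hw
  obtain ⟨C, hC⟩ := (isCompact_sphere (0 : ℂ) R).exists_bound_of_continuousOn hg
  simp only [← circleIntegral.integral_const_mul]
  refine hasSum_circleIntegral_of_norm_le (u := fun n => ‖w‖⁻¹ * (R / ‖w‖) ^ n * C) hR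
    (fun n => by fun_prop) ?_ (fun n ξ hξ => ?_) fun ξ hξ => ?_
  · exact ((summable_geometric_of_lt_one (by positivity) ((div_lt_one hw₀).mpr hw)).mul_left
      ‖w‖⁻¹).mul_right C
  · rw [mem_sphere_zero_iff_norm] at hξ
    rw [← mul_assoc, norm_mul, norm_zpow_neg_sub_one_mul_pow, hξ]
    exact mul_le_mul_of_nonneg_left (hC ξ (by simpa using hξ)) (by positivity)
  · rw [mem_sphere_zero_iff_norm] at hξ
    have key := (hasSum_zpow_neg_sub_one_mul_pow (hξ ▸ hw)).mul_right (g ξ)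
    rw [← div_eq_inv_mul] at key
    exact key.congr_fun fun n => by ring

noncomputable def laurentCoeff (f : ℂ → ℂ) (ρ : ℝ) (n : ℤ) : ℂ :=
  (2 * π * I)⁻¹ * ∮ w in C(0, ρ), w ^ (-n - 1) * f w

section Laurent

variable {ρ₁ ρ₂ : ℝ} {f : ℂ → ℂ}

theorem laurentCoeff_congr_radius (hρ₁ : 0 ≤ ρ₁)
    (hf : DifferentiableOn ℂ f {w : ℂ | ρ₁ < ‖w‖ ∧ ‖w‖ < ρ₂}) {a b : ℝ} (ha₁ : ρ₁ < a)
    (ha₂ : a < ρ₂) (hb₁ : ρ₁ < b) (hb₂ : b < ρ₂) (n : ℤ) :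
    laurentCoeff f a n = laurentCoeff f b n := by
  refine congrArg _ (circleIntegral_eq_of_differentiableOn_annulus hρ₁ ?_ ha₁ ha₂ hb₁ hb₂)
  exact (differentiableOn_id.zpow (Or.inl fun w hw => ne_zero_of_mem_annulus hρ₁ hw)).mul hf

theorem norm_laurentCoeff_le {R C : ℝ} (hR : 0 < R) (hC : ∀ w ∈ sphere (0 : ℂ) R, ‖f w‖ ≤ C)
    (n : ℤ) : ‖laurentCoeff f R n‖ ≤ C * R ^ (-n) := by
  have hbound : ∀ w ∈ sphere (0 : ℂ) R, ‖w ^ (-n - 1) * f w‖ ≤ R ^ (-n - 1) * C := by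
    intro w hw
    rw [norm_mul, norm_zpow, mem_sphere_zero_iff_norm.mp hw]
    exact mul_le_mul_of_nonneg_left (hC w hw) (by positivity)
  have := circleIntegral.norm_two_pi_i_inv_smul_integral_le_of_norm_le_const hR.le hbound
  rw [smul_eq_mul] at this
  calc ‖laurentCoeff f R n‖ ≤ R * (R ^ (-n - 1) * C) := this
    _ = C * R ^ (-n) := by
      rw [zpow_sub_one₀ hR.ne']
      field_simp

theorem summable_norm_laurentCoeff_mul_zpow (hρ₁ : 0 ≤ ρ₁)
    (hf : DifferentiableOn ℂ f {w : ℂ | ρ₁ < ‖w‖ ∧ ‖w‖ < ρ₂}) {ρ r : ℝ} (hρ₁ρ : ρ₁ < ρ)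
    (hρρ₂ : ρ < ρ₂) (hr₁ : ρ₁ < r) (hr₂ : r < ρ₂) :
    Summable fun n : ℤ => ‖laurentCoeff f ρ n‖ * r ^ n := by
  obtain ⟨a, hρ₁a, har⟩ := exists_between hr₁
  obtain ⟨b, hrb, hbρ₂⟩ := exists_between hr₂
  have ha : 0 < a := hρ₁.trans_lt hρ₁a
  have hr : 0 < r := ha.trans har
  obtain ⟨Ca, hCa⟩ := (isCompact_sphere (0 : ℂ) a).exists_bound_of_continuousOn
    (hf.continuousOn.mono (sphere_subset_annulus hρ₁a (har.trans hr₂)))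
  obtain ⟨Cb, hCb⟩ := (isCompact_sphere (0 : ℂ) b).exists_bound_of_continuousOn
    (hf.continuousOn.mono (sphere_subset_annulus (hr₁.trans hrb) hbρ₂))
  refine Summable.of_nat_of_neg_add_one ?_ ?_
  · refine Summable.of_nonneg_of_le
      (fun n => mul_nonneg (norm_nonneg _) (zpow_nonneg hr.le _)) (fun n => ?_)
      ((summable_geometric_of_lt_one (div_nonneg hr.le (hr.trans hrb).le)
        ((div_lt_one (hr.trans hrb)).mpr hrb)).mul_left Cb)
    rw [laurentCoeff_congr_radius hρ₁ hf hρ₁ρ hρρ₂ (hr₁.trans hrb) hbρ₂]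
    calc ‖laurentCoeff f b n‖ * r ^ (n : ℤ) ≤ Cb * b ^ (-(n : ℤ)) * r ^ (n : ℤ) :=
          mul_le_mul_of_nonneg_right (norm_laurentCoeff_le (hr.trans hrb) hCb n)
            (zpow_nonneg hr.le _)
      _ = Cb * (r / b) ^ n := by
        rw [zpow_neg, zpow_natCast, zpow_natCast, div_pow]
        ring
  · refine Summable.of_nonneg_of_le
      (fun n => mul_nonneg (norm_nonneg _) (zpow_nonneg hr.le _)) (fun n => ?_)
      (((summable_geometric_of_lt_one (div_nonneg ha.le hr.le) ((div_lt_one hr).mpr har)).mul_left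
        (a / r)).mul_left Ca)
    rw [laurentCoeff_congr_radius hρ₁ hf hρ₁ρ hρρ₂ hρ₁a (har.trans hr₂)]
    calc ‖laurentCoeff f a (-(n + 1 : ℕ))‖ * r ^ (-(n + 1 : ℕ) : ℤ)
        ≤ Ca * a ^ (-(-(n + 1 : ℕ) : ℤ)) * r ^ (-(n + 1 : ℕ) : ℤ) :=
          mul_le_mul_of_nonneg_right (norm_laurentCoeff_le ha hCa _) (zpow_nonneg hr.le _)
      _ = Ca * (a / r * (a / r) ^ n) := by
        rw [neg_neg, zpow_neg, zpow_natCast, zpow_natCast, ← pow_succ', div_pow]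
        ring

theorem hasSum_laurentCoeff (hρ₁ : 0 ≤ ρ₁) (hf : DifferentiableOn ℂ f {w : ℂ | ρ₁ < ‖w‖ ∧ ‖w‖ < ρ₂})
    {ρ : ℝ} (hρ₁ρ : ρ₁ < ρ) (hρρ₂ : ρ < ρ₂) {w : ℂ}
    (hw : w ∈ {w : ℂ | ρ₁ < ‖w‖ ∧ ‖w‖ < ρ₂}) :
    HasSum (fun n : ℤ => laurentCoeff f ρ n * w ^ n) (f w) := by
  obtain ⟨a, hρ₁a, haw⟩ := exists_between hw.1
  obtain ⟨b, hwb, hbρ₂⟩ := exists_between hw.2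
  have hb₁ : ρ₁ < b := hρ₁a.trans (haw.trans hwb)
  have ha₂ : a < ρ₂ := (haw.trans hwb).trans hbρ₂
  have hpos := (hasSum_circleIntegral_div_sub_of_norm_lt
    (hf.continuousOn.mono (sphere_subset_annulus hb₁ hbρ₂)) hwb).mul_left (2 * π * I)⁻¹
  have hneg := (hasSum_circleIntegral_div_sub_of_lt_norm
    (hf.continuousOn.mono (sphere_subset_annulus hρ₁a ha₂)) (hρ₁.trans hρ₁a.le) haw).mul_left
      (2 * π * I)⁻¹
  have hsum := HasSum.of_nat_of_neg_add_one (f := fun n : ℤ => laurentCoeff f ρ n * w ^ n)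
    (hpos.congr_fun fun n => ?_) (hneg.congr_fun fun n => ?_)
  · rwa [← mul_add, circleIntegral_div_sub_add_circleIntegral_div_sub hρ₁ hf hρ₁a haw hwb hbρ₂,
      ← mul_assoc, inv_mul_cancel₀ two_pi_I_ne_zero, one_mul] at hsum
  · rw [laurentCoeff_congr_radius hρ₁ hf hρ₁ρ hρρ₂ hb₁ hbρ₂, laurentCoeff, zpow_natCast]
    ring
  · rw [laurentCoeff_congr_radius hρ₁ hf hρ₁ρ hρρ₂ hρ₁a ha₂, laurentCoeff,
      show -(-((n : ℤ) + 1)) - 1 = n by ring, show -((n : ℤ) + 1) = -n - 1 by ring]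
    simp only [zpow_natCast]
    ring

theorem summable_norm_laurentCoeff_mul_laurentCoeff (hρ₁ : 0 ≤ ρ₁)
    (hf : DifferentiableOn ℂ f {w : ℂ | ρ₁ < ‖w‖ ∧ ‖w‖ < ρ₂}) {ρ : ℝ} (hρ₁ρ : ρ₁ < ρ)
    (hρρ₂ : ρ < ρ₂) :
    Summable fun n : ℤ => ‖laurentCoeff f ρ n * laurentCoeff f ρ (-n - 1)‖ := by
  have hρ : 0 < ρ := hρ₁.trans_lt hρ₁ρ
  obtain ⟨C, hC⟩ := (isCompact_sphere (0 : ℂ) ρ).exists_bound_of_continuousOn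
    (hf.continuousOn.mono (sphere_subset_annulus hρ₁ρ hρρ₂))
  refine Summable.of_nonneg_of_le (fun n => norm_nonneg _) (fun n => ?_)
    ((summable_norm_laurentCoeff_mul_zpow hρ₁ hf hρ₁ρ hρρ₂ hρ₁ρ hρρ₂).mul_left (C * ρ))
  have h := norm_laurentCoeff_le hρ hC (-n - 1)
  rw [show -(-n - 1) = n + 1 by ring, zpow_add_one₀ hρ.ne'] at h
  calc ‖laurentCoeff f ρ n * laurentCoeff f ρ (-n - 1)‖
      ≤ ‖laurentCoeff f ρ n‖ * (C * (ρ ^ n * ρ)) := by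
        rw [norm_mul]
        exact mul_le_mul_of_nonneg_left h (norm_nonneg _)
    _ = C * ρ * (‖laurentCoeff f ρ n‖ * ρ ^ n) := by ring

end Laurent

section Composition

variable {ρ₁ ρ₂ ρ R : ℝ} {f ζ : ℂ → ℂ} {c : ℂ} {U : Set ℂ}

theorem IsCompact.exists_norm_bounds_of_subset_annulus {K : Set ℂ} (hK : IsCompact K)
    (hKW : K ⊆ {w : ℂ | ρ₁ < ‖w‖ ∧ ‖w‖ < ρ₂}) :
    ∃ a b : ℝ, ρ₁ < a ∧ b < ρ₂ ∧ ∀ w ∈ K, a ≤ ‖w‖ ∧ ‖w‖ ≤ b := by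
  rcases K.eq_empty_or_nonempty with rfl | hne
  · exact ⟨ρ₁ + 1, ρ₂ - 1, by linarith, by linarith, by simp⟩
  obtain ⟨u, hu, hmin⟩ := hK.exists_isMinOn hne continuous_norm.continuousOn
  obtain ⟨v, hv, hmax⟩ := hK.exists_isMaxOn hne continuous_norm.continuousOn
  exact ⟨‖u‖, ‖v‖, (hKW hu).1, (hKW hv).2, fun w hw => ⟨hmin hw, hmax hw⟩⟩

theorem hasSum_circleIntegral_comp_mul (hρ₁ : 0 ≤ ρ₁)
    (hf : DifferentiableOn ℂ f {w : ℂ | ρ₁ < ‖w‖ ∧ ‖w‖ < ρ₂}) (hρ₁ρ : ρ₁ < ρ) (hρρ₂ : ρ < ρ₂)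
    {G : ℂ → ℂ} (hR : 0 ≤ R)
    (hζ : ContinuousOn ζ (sphere c R)) (hζW : MapsTo ζ (sphere c R) {w : ℂ | ρ₁ < ‖w‖ ∧ ‖w‖ < ρ₂})
    (hG : ContinuousOn G (sphere c R)) :
    HasSum (fun n : ℤ => laurentCoeff f ρ n * ∮ z in C(c, R), ζ z ^ n * G z)
      (∮ z in C(c, R), f (ζ z) * G z) := by
  obtain ⟨a, b, hρ₁a, hbρ₂, hab⟩ :=
    ((isCompact_sphere c R).image_of_continuousOn hζ).exists_norm_bounds_of_subset_annulus
      hζW.image_subset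
  have ha : 0 < a := hρ₁.trans_lt hρ₁a
  obtain ⟨C, hC⟩ := (isCompact_sphere c R).exists_bound_of_continuousOn hG
  simp only [← circleIntegral.integral_const_mul]
  refine hasSum_circleIntegral_of_norm_le
    (u := fun n => (‖laurentCoeff f ρ n‖ * a ^ n + ‖laurentCoeff f ρ n‖ * b ^ n) * C) hR
    (fun n => ?_) ?_ (fun n z hz => ?_) fun z hz => ?_
  · refine continuousOn_const.mul ((hζ.zpow₀ n fun z hz => Or.inl ?_).mul hG)
    exact ne_zero_of_mem_annulus hρ₁ (hζW hz)
  · have hab' := hab _ (mem_image_of_mem ζ (circleMap_mem_sphere c hR 0))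
    exact ((summable_norm_laurentCoeff_mul_zpow hρ₁ hf hρ₁ρ hρρ₂ hρ₁a
      (hab'.1.trans_lt (hab'.2.trans_lt hbρ₂))).add
      (summable_norm_laurentCoeff_mul_zpow hρ₁ hf hρ₁ρ hρρ₂
      (hρ₁a.trans_le (hab'.1.trans hab'.2)) hbρ₂)).mul_right C
  · obtain ⟨h₁, h₂⟩ := hab _ (mem_image_of_mem ζ hz)
    rw [norm_mul, norm_mul, norm_zpow, ← mul_assoc, ← mul_add]
    have h := mul_le_mul_of_nonneg_left (zpow_le_zpow_add_zpow ha h₁ h₂ n)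
      (norm_nonneg (laurentCoeff f ρ n))
    exact mul_le_mul h (hC z hz) (norm_nonneg _) (le_trans (by positivity) h)
  · exact ((hasSum_laurentCoeff hρ₁ hf hρ₁ρ hρρ₂ (hζW hz)).mul_right (G z)).congr_fun
      fun n => by ring

theorem circleIntegral_zpow_mul_deriv (hR : 0 ≤ R) (hζ : ∀ z ∈ sphere c R, DifferentiableAt ℂ ζ z)
    (hζ₀ : ∀ z ∈ sphere c R, ζ z ≠ 0)
    (hwind : (∮ z in C(c, R), deriv ζ z / ζ z) = 2 * π * I) (k : ℤ) :
    (∮ z in C(c, R), ζ z ^ k * deriv ζ z) = if k = -1 then 2 * π * I else 0 := by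
  split_ifs with hk
  · rw [← hwind, hk]
    exact circleIntegral.integral_congr hR fun z _ => by
      simp only [zpow_neg_one, div_eq_inv_mul]
  · have hk' : (k + 1 : ℂ) ≠ 0 := by exact_mod_cast (show k + 1 ≠ 0 by omega)
    refine circleIntegral.integral_eq_zero_of_hasDerivWithinAt
      (f := fun z => ζ z ^ (k + 1) / (k + 1)) hR fun z hz => HasDerivAt.hasDerivWithinAt ?_
    refine (((hasDerivAt_zpow (k + 1) (ζ z) (Or.inl (hζ₀ z hz))).comp z
      (hζ z hz).hasDerivAt).div_const (k + 1 : ℂ)).congr_deriv ?_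
    push_cast
    field_simp
    ring_nf

theorem circleIntegral_comp_mul_deriv (hρ₁ : 0 ≤ ρ₁)
    (hf : DifferentiableOn ℂ f {w : ℂ | ρ₁ < ‖w‖ ∧ ‖w‖ < ρ₂}) (hρ₁ρ : ρ₁ < ρ) (hρρ₂ : ρ < ρ₂)
    (hR : 0 ≤ R) (hU : IsOpen U) (hRU : sphere c R ⊆ U) (hζ : DifferentiableOn ℂ ζ U)
    (hζW : MapsTo ζ (sphere c R) {w : ℂ | ρ₁ < ‖w‖ ∧ ‖w‖ < ρ₂})
    (hwind : (∮ z in C(c, R), deriv ζ z / ζ z) = 2 * π * I) :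
    (∮ z in C(c, R), f (ζ z) * deriv ζ z) = ∮ w in C(0, ρ), f w := by
  have hsum := hasSum_circleIntegral_comp_mul hρ₁ hf hρ₁ρ hρρ₂ hR (hζ.continuousOn.mono hRU) hζW
    ((hζ.deriv hU).continuousOn.mono hRU)
  have hmoment := circleIntegral_zpow_mul_deriv hR
    (fun z hz => hζ.differentiableAt (hU.mem_nhds (hRU hz)))
    (fun z hz => ne_zero_of_mem_annulus hρ₁ (hζW hz)) hwind
  simp only [hmoment, mul_ite, mul_zero] at hsum
  rw [hsum.unique (hasSum_single (-1) fun n hn => if_neg hn), if_pos rfl, laurentCoeff,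
    mul_right_comm, inv_mul_cancel₀ two_pi_I_ne_zero, one_mul]
  norm_num

theorem circleIntegral_zpow_mul_deriv_mul_comp (hρ₁ : 0 ≤ ρ₁)
    (hf : DifferentiableOn ℂ f {w : ℂ | ρ₁ < ‖w‖ ∧ ‖w‖ < ρ₂}) (hρ₁ρ : ρ₁ < ρ) (hρρ₂ : ρ < ρ₂)
    (hR : 0 ≤ R) (hU : IsOpen U) (hRU : sphere c R ⊆ U) (hζ : DifferentiableOn ℂ ζ U)
    (hζW : MapsTo ζ (sphere c R) {w : ℂ | ρ₁ < ‖w‖ ∧ ‖w‖ < ρ₂})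
    (hwind : (∮ z in C(c, R), deriv ζ z / ζ z) = 2 * π * I) (k : ℤ) :
    (∮ z in C(c, R), ζ z ^ k * deriv ζ z * f (ζ z)) = 2 * π * I * laurentCoeff f ρ (-k - 1) := by
  have hg : DifferentiableOn ℂ (fun w => w ^ k * f w) {w : ℂ | ρ₁ < ‖w‖ ∧ ‖w‖ < ρ₂} :=
    (differentiableOn_id.zpow (Or.inl fun w hw => ne_zero_of_mem_annulus hρ₁ hw)).mul hf
  rw [laurentCoeff, ← mul_assoc, mul_inv_cancel₀ two_pi_I_ne_zero, one_mul,
    show -(-k - 1) - 1 = k by ring, ← circleIntegral_comp_mul_deriv hρ₁ hg hρ₁ρ hρρ₂ hR hU hRU hζ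
      hζW hwind]
  exact circleIntegral.integral_congr hR fun z _ => by ring

theorem circleIntegral_deriv_mul_comp_sq (hρ₁ : 0 ≤ ρ₁)
    (hf : DifferentiableOn ℂ f {w : ℂ | ρ₁ < ‖w‖ ∧ ‖w‖ < ρ₂}) (hρ₁ρ : ρ₁ < ρ) (hρρ₂ : ρ < ρ₂)
    (hR : 0 ≤ R) (hU : IsOpen U) (hRU : sphere c R ⊆ U) (hζ : DifferentiableOn ℂ ζ U)
    (hζW : MapsTo ζ (sphere c R) {w : ℂ | ρ₁ < ‖w‖ ∧ ‖w‖ < ρ₂})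
    (hwind : (∮ z in C(c, R), deriv ζ z / ζ z) = 2 * π * I) :
    (∮ z in C(c, R), deriv ζ z * f (ζ z) ^ 2)
      = 2 * π * I * ∑' n : ℤ, laurentCoeff f ρ n * laurentCoeff f ρ (-n - 1) := by
  have hsum := hasSum_circleIntegral_comp_mul (G := fun z => deriv ζ z * f (ζ z)) hρ₁ hf hρ₁ρ
    hρρ₂ hR (hζ.continuousOn.mono hRU) hζW (((hζ.deriv hU).continuousOn.mono hRU).mul
      ((hf.continuousOn.comp (hζ.continuousOn.mono hRU) hζW)))
  have hterm (n : ℤ) : laurentCoeff f ρ n * (∮ z in C(c, R), ζ z ^ n * (deriv ζ z * f (ζ z)))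
      = 2 * π * I * (laurentCoeff f ρ n * laurentCoeff f ρ (-n - 1)) := by
    simp_rw [← mul_assoc]
    rw [circleIntegral_zpow_mul_deriv_mul_comp hρ₁ hf hρ₁ρ hρρ₂ hR hU hRU hζ hζW hwind]
    ring
  rw [← tsum_mul_left, ← tsum_congr hterm, hsum.tsum_eq]
  exact circleIntegral.integral_congr hR fun z _ => by ring

end Composition

theorem ne_zero_of_exp_eq_div {a b z : ℂ} (h : exp a = b / z) : b ≠ 0 ∧ z ≠ 0 :=
  div_ne_zero_iff.mp (h ▸ exp_ne_zero a)

theorem eq_mul_exp_of_exp_eq_div {a b z : ℂ} (h : exp a = b / z) : b = z * exp a := by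
  rw [h, mul_div_cancel₀ _ (ne_zero_of_exp_eq_div h).2]

section Logarithm

variable {ζ L : ℂ → ℂ} {U : Set ℂ} {R : ℝ}

theorem hasDerivAt_of_exp_eq_div (hU : IsOpen U) (hL : DifferentiableOn ℂ L U)
    (hexp : ∀ z ∈ U, exp (L z) = ζ z / z) {z : ℂ} (hz : z ∈ U) :
    HasDerivAt ζ (ζ z * (deriv L z + z⁻¹)) z := by
  have hζ : ζ =ᶠ[𝓝 z] fun w => w * exp (L w) :=
    eventually_of_mem (hU.mem_nhds hz) fun w hw => eq_mul_exp_of_exp_eq_div (hexp w hw)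
  have hLd := (hL.differentiableAt (hU.mem_nhds hz)).hasDerivAt
  refine (((hasDerivAt_id z).mul hLd.cexp).congr_of_eventuallyEq hζ).congr_deriv ?_
  rw [eq_mul_exp_of_exp_eq_div (hexp z hz), id]
  field_simp [(ne_zero_of_exp_eq_div (hexp z hz)).2]
  ring

theorem circleIntegral_zpow_div_eq (hR : 0 ≤ R) (hU : IsOpen U) (hRU : sphere 0 R ⊆ U)
    (hζ : DifferentiableOn ℂ ζ U) (hL : DifferentiableOn ℂ L U)
    (hexp : ∀ z ∈ U, exp (L z) = ζ z / z) {i : ℤ} (hi : i ≠ 0) :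
    (∮ z in C(0, R), ζ z ^ (-i) / (i : ℂ) / z)
      = -∮ z in C(0, R), ζ z ^ (-i - 1) * deriv ζ z * L z := by
  have hne (z) (hz : z ∈ sphere (0 : ℂ) R) := ne_zero_of_exp_eq_div (hexp z (hRU hz))
  have hζc := hζ.continuousOn.mono hRU
  rw [neg_eq_neg_one_mul (∮ z in C(0, R), _), ← circleIntegral.integral_const_mul]
  refine circleIntegral_eq_of_hasDerivAt_sub
    (F := fun w => -ζ w ^ (-i) / (i : ℂ) ^ 2 - ζ w ^ (-i) * L w / i) hR (fun z hz => ?_) ?_ ?_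
  · have hp := (hasDerivAt_zpow (-i) (ζ z) (Or.inl (hne z hz).1)).comp z
      (hasDerivAt_of_exp_eq_div hU hL hexp (hRU hz))
    refine ((hp.neg.div_const _).sub ((hp.mul (hL.differentiableAt
      (hU.mem_nhds (hRU hz))).hasDerivAt).div_const _)).congr_deriv ?_
    rw [(hasDerivAt_of_exp_eq_div hU hL hexp (hRU hz)).deriv, zpow_sub_one₀ (hne z hz).1]
    have hi' : (i : ℂ) ≠ 0 := Int.cast_ne_zero.mpr hi
    simp only [Function.comp_apply]
    field_simp [(hne z hz).1, (hne z hz).2]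
    push_cast
    ring
  · exact (((hζc.zpow₀ _ fun z hz => Or.inl (hne z hz).1).div_const _).div continuousOn_id
      fun z hz => (hne z hz).2).circleIntegrable hR
  · exact (continuousOn_const.mul (((hζc.zpow₀ _ fun z hz => Or.inl (hne z hz).1).mul
      ((hζ.deriv hU).continuousOn.mono hRU)).mul (hL.continuousOn.mono hRU))).circleIntegrable hR

theorem circleIntegral_div_eq (hR : 0 ≤ R) (hU : IsOpen U) (hRU : sphere 0 R ⊆ U)
    (hζ : DifferentiableOn ℂ ζ U) (hL : DifferentiableOn ℂ L U)
    (hexp : ∀ z ∈ U, exp (L z) = ζ z / z) :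
    (∮ z in C(0, R), L z / z) = ∮ z in C(0, R), ζ z ^ (-1 : ℤ) * deriv ζ z * L z := by
  have hne (z) (hz : z ∈ sphere (0 : ℂ) R) := ne_zero_of_exp_eq_div (hexp z (hRU hz))
  have hLc := hL.continuousOn.mono hRU
  refine (circleIntegral_eq_of_hasDerivAt_sub (F := fun w => L w ^ 2 / 2) hR (fun z hz => ?_) ?_
    ?_).symm
  · have hLd := (hL.differentiableAt (hU.mem_nhds (hRU hz))).hasDerivAt
    refine ((hLd.pow 2).div_const 2).congr_deriv ?_
    rw [(hasDerivAt_of_exp_eq_div hU hL hexp (hRU hz)).deriv, zpow_neg_one]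
    field_simp [(hne z hz).1, (hne z hz).2]
    ring
  · exact ((((hζ.continuousOn.mono hRU).zpow₀ _ fun z hz => Or.inl (hne z hz).1).mul
      ((hζ.deriv hU).continuousOn.mono hRU)).mul hLc).circleIntegrable hR
  · exact (hLc.div continuousOn_id fun z hz => (hne z hz).2).circleIntegrable hR

theorem circleIntegral_mul_sub_one_div_eq (hR : 0 ≤ R) (hU : IsOpen U) (hRU : sphere 0 R ⊆ U)
    (hζ : DifferentiableOn ℂ ζ U) (hL : DifferentiableOn ℂ L U)
    (hexp : ∀ z ∈ U, exp (L z) = ζ z / z) :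
    (∮ z in C(0, R), ζ z * (L z - 1) / z) = 2⁻¹ * ∮ z in C(0, R), deriv ζ z * L z ^ 2 := by
  have hne (z) (hz : z ∈ sphere (0 : ℂ) R) := ne_zero_of_exp_eq_div (hexp z (hRU hz))
  have hLc := hL.continuousOn.mono hRU
  rw [← circleIntegral.integral_const_mul]
  refine circleIntegral_eq_of_hasDerivAt_sub
    (F := fun w => ζ w * L w - ζ w * L w ^ 2 / 2 - ζ w) hR (fun z hz => ?_) ?_ ?_
  · have hζd := hasDerivAt_of_exp_eq_div hU hL hexp (hRU hz)
    have hLd := (hL.differentiableAt (hU.mem_nhds (hRU hz))).hasDerivAt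
    refine (((hζd.mul hLd).sub ((hζd.mul (hLd.pow 2)).div_const 2)).sub hζd).congr_deriv ?_
    rw [hζd.deriv, Pi.pow_apply]
    field_simp [(hne z hz).1, (hne z hz).2]
    ring
  · exact (((hζ.continuousOn.mono hRU).mul (hLc.sub continuousOn_const)).div continuousOn_id
      fun z hz => (hne z hz).2).circleIntegrable hR
  · exact (continuousOn_const.mul (((hζ.deriv hU).continuousOn.mono hRU).mul
      (hLc.pow 2))).circleIntegrable hR

end Logarithm

theorem stmt_16_general (r R : ℝ) (hr1 : r < 1) (hR : 1 < R)
    (ζ L : ℂ → ℂ)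
    (hζ : DifferentiableOn ℂ ζ {z : ℂ | r < ‖z‖ ∧ ‖z‖ < R})
    (hwind : (2 * Real.pi * Complex.I)⁻¹ * (∮ z in C(0, 1), deriv ζ z / ζ z) = 1)
    (hL : DifferentiableOn ℂ L {z : ℂ | r < ‖z‖ ∧ ‖z‖ < R})
    (hexp : ∀ z : ℂ, r < ‖z‖ → ‖z‖ < R →
      Complex.exp (L z) = ζ z / z)
    (ρ₁ ρ₂ : ℝ) (hρ₁ : 0 < ρ₁) (hρ₁₂ : ρ₁ < ρ₂)
    (h : ℂ → ℂ)
    (hh : DifferentiableOn ℂ h {w : ℂ | ρ₁ < ‖w‖ ∧ ‖w‖ < ρ₂})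
    (hhA : ∀ w : ℂ, ρ₁ < ‖w‖ → ‖w‖ < ρ₂ →
      r < ‖h w‖ ∧ ‖h w‖ < R)
    (himg : ∀ z : ℂ, ‖z‖ = 1 →
      ρ₁ < ‖ζ z‖ ∧ ‖ζ z‖ < ρ₂)
    (hleft : ∀ z : ℂ, ‖z‖ = 1 → h (ζ z) = z)
    (t : ℤ → ℂ)
    (ht : ∀ i : ℤ, i ≠ 0 →
      t i = (2 * Real.pi * Complex.I)⁻¹ * ∮ z in C(0, 1), ζ z ^ (-i) / (i : ℂ) / z)
    (ht0 : t 0 = -((2 * Real.pi * Complex.I)⁻¹ * ∮ z in C(0, 1), L z / z)) :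
    Summable (fun i : ℕ => ‖t (i : ℤ) * t (-(i : ℤ) - 1)‖) ∧
    (2 * Real.pi * Complex.I)⁻¹ * (∮ z in C(0, 1), ζ z * (L z - 1) / z)
      = ∑' i : ℕ, t (i : ℤ) * t (-(i : ℤ) - 1) := by
  have hA := isOpen_annulus r R
  have hSA : sphere (0 : ℂ) 1 ⊆ {z : ℂ | r < ‖z‖ ∧ ‖z‖ < R} := sphere_subset_annulus hr1 hR
  have hexpA (z) (hz : z ∈ {z : ℂ | r < ‖z‖ ∧ ‖z‖ < R}) := hexp z hz.1 hz.2
  have hM : DifferentiableOn ℂ (L ∘ h) {w : ℂ | ρ₁ < ‖w‖ ∧ ‖w‖ < ρ₂} :=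
    hL.comp hh fun w hw => hhA w hw.1 hw.2
  have hζW : MapsTo ζ (sphere 0 1) {w : ℂ | ρ₁ < ‖w‖ ∧ ‖w‖ < ρ₂} := fun z hz =>
    himg z (mem_sphere_zero_iff_norm.mp hz)
  have hwind' := ((inv_mul_eq_one₀ two_pi_I_ne_zero).mp hwind).symm
  obtain ⟨ρ, hρ₁ρ, hρρ₂⟩ := exists_between hρ₁₂
  set c := laurentCoeff (L ∘ h) ρ
  have hLM : ∀ z ∈ sphere (0 : ℂ) 1, (L ∘ h) (ζ z) = L z := fun z hz => by
    simp [hleft z (mem_sphere_zero_iff_norm.mp hz)]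
  have key (k : ℤ) : (∮ z in C(0, 1), ζ z ^ k * deriv ζ z * L z) = 2 * π * I * c (-k - 1) := by
    rw [← circleIntegral_zpow_mul_deriv_mul_comp hρ₁.le hM hρ₁ρ hρρ₂ zero_le_one hA hSA hζ hζW
      hwind' k]
    exact circleIntegral.integral_congr zero_le_one fun z hz => by rw [← hLM z hz]
  have htc (i : ℤ) : t i = -c i := by
    rcases eq_or_ne i 0 with rfl | hi
    · rw [ht0, circleIntegral_div_eq zero_le_one hA hSA hζ hL hexpA, key,
        inv_mul_cancel_left₀ two_pi_I_ne_zero]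
      norm_num
    · rw [ht i hi, circleIntegral_zpow_div_eq zero_le_one hA hSA hζ hL hexpA hi, key,
        show -(-i - 1) - 1 = i by ring, mul_neg, inv_mul_cancel_left₀ two_pi_I_ne_zero]
  have hprod (n : ℕ) : t n * t (-n - 1) = c n * c (-n - 1) := by rw [htc, htc, neg_mul_neg]
  have hsum : Summable fun n : ℤ => ‖c n * c (-n - 1)‖ :=
    summable_norm_laurentCoeff_mul_laurentCoeff hρ₁.le hM hρ₁ρ hρρ₂
  refine ⟨(hsum.comp_injective Nat.cast_injective).congr fun n => by
    rw [Function.comp_apply, hprod], ?_⟩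
  have hquad : (∮ z in C(0, 1), deriv ζ z * L z ^ 2) = 2 * π * I * ∑' n : ℤ, c n * c (-n - 1) := by
    rw [← circleIntegral_deriv_mul_comp_sq hρ₁.le hM hρ₁ρ hρρ₂ zero_le_one hA hSA hζ hζW hwind']
    exact circleIntegral.integral_congr zero_le_one fun z hz => by rw [hLM z hz]
  rw [tsum_congr hprod, circleIntegral_mul_sub_one_div_eq zero_le_one hA hSA hζ hL hexpA, hquad,
    tsum_int_eq_two_mul_tsum_nat hsum.of_norm fun n => by
      rw [show -(-n - 1) - 1 = n by ring, mul_comm]]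
  field_simp

/-- The identity `(2πi)⁻¹ ∮_{|z|=1} ζ(z)(log(ζ(z)/z) - 1) dz/z = ∑_{i≥0} tⁱ t^{-i-1}`
underlying Proposition 2.12 (thm-FF) of Wu–Zuo, where the `tⁱ` are the flat
coordinates defined by contour integrals, `L` is a holomorphic branch of
`log(ζ(z)/z)`, and `h` is a holomorphic inverse of `ζ` on an annulus `W`
containing `ζ(S¹)`. -/
theorem stmt_16 (r R : ℝ) (hr : 0 < r) (hr1 : r < 1) (hR : 1 < R)
    (ζ L : ℂ → ℂ)
    (hζ : DifferentiableOn ℂ ζ {z : ℂ | r < ‖z‖ ∧ ‖z‖ < R})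
    (hne : ∀ z : ℂ, r < ‖z‖ → ‖z‖ < R → ζ z ≠ 0)
    (hwind : (2 * Real.pi * Complex.I)⁻¹ * (∮ z in C(0, 1), deriv ζ z / ζ z) = 1)
    (hL : DifferentiableOn ℂ L {z : ℂ | r < ‖z‖ ∧ ‖z‖ < R})
    (hexp : ∀ z : ℂ, r < ‖z‖ → ‖z‖ < R →
      Complex.exp (L z) = ζ z / z)
    (ρ₁ ρ₂ : ℝ) (hρ₁ : 0 < ρ₁) (hρ₁₂ : ρ₁ < ρ₂)
    (h : ℂ → ℂ)
    (hh : DifferentiableOn ℂ h {w : ℂ | ρ₁ < ‖w‖ ∧ ‖w‖ < ρ₂})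
    (hhA : ∀ w : ℂ, ρ₁ < ‖w‖ → ‖w‖ < ρ₂ →
      r < ‖h w‖ ∧ ‖h w‖ < R)
    (himg : ∀ z : ℂ, ‖z‖ = 1 →
      ρ₁ < ‖ζ z‖ ∧ ‖ζ z‖ < ρ₂)
    (hright : ∀ w : ℂ, ρ₁ < ‖w‖ → ‖w‖ < ρ₂ → ζ (h w) = w)
    (hleft : ∀ z : ℂ, ‖z‖ = 1 → h (ζ z) = z)
    (t : ℤ → ℂ)
    (ht : ∀ i : ℤ, i ≠ 0 →
      t i = (2 * Real.pi * Complex.I)⁻¹ * ∮ z in C(0, 1), ζ z ^ (-i) / (i : ℂ) / z)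
    (ht0 : t 0 = -((2 * Real.pi * Complex.I)⁻¹ * ∮ z in C(0, 1), L z / z)) :
    Summable (fun i : ℕ => ‖t (i : ℤ) * t (-(i : ℤ) - 1)‖) ∧
    (2 * Real.pi * Complex.I)⁻¹ * (∮ z in C(0, 1), ζ z * (L z - 1) / z)
      = ∑' i : ℕ, t (i : ℤ) * t (-(i : ℤ) - 1) :=
  stmt_16_general r R hr1 hR ζ L hζ hwind hL hexp ρ₁ ρ₂ hρ₁ hρ₁₂ h hh hhA himg hleft t ht ht0
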